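/- arXiv:2301.04373 — 4 statements merged into one kernel-verified Lean document; each statement's English description precedes it below -/
import Mathlib

section
/- (Petree–Tartar) Let E, F, G be Banach spaces, T : E → F an injective bounded linear map, and κ : E → G a compact linear operator. If there exists γ > 0 such that ‖T x‖_F + ‖κ x‖_G ≥ γ ‖x‖_E for all x ∈ E, then there exists c > 0 with ‖T x‖_F ≥ c ‖x‖_E for all x ∈ E; in particular the range of T is closed. -/
/-- Petree–Tartar lemma: if `T : E → F` is injective bounded linear, `κ : E → G` is a
compact operator, and `‖T x‖ + ‖κ x‖ ≥ γ ‖x‖` for some `γ > 0`, then `T` is bounded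
below, and in particular has closed range. -/
theorem petree_tartar
    {E F G : Type*} [NormedAddCommGroup E] [NormedSpace ℝ E] [CompleteSpace E]
    [NormedAddCommGroup F] [NormedSpace ℝ F] [CompleteSpace F]
    [NormedAddCommGroup G] [NormedSpace ℝ G] [CompleteSpace G]
    (T : E →L[ℝ] F) (hinj : Function.Injective T)
    (κ : E →L[ℝ] G) (hκ : IsCompactOperator κ)
    (γ : ℝ) (hγ : 0 < γ) (h : ∀ x : E, γ * ‖x‖ ≤ ‖T x‖ + ‖κ x‖) :
    (∃ c : ℝ, 0 < c ∧ ∀ x : E, c * ‖x‖ ≤ ‖T x‖) ∧ IsClosed (Set.range T) := by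
  have main : ∃ c : ℝ, 0 < c ∧ ∀ x : E, c * ‖x‖ ≤ ‖T x‖ := by
    by_contra hc
    push_neg at hc
    -- construct normalized sequence
    have hseq : ∀ n : ℕ, ∃ u : E, ‖u‖ = 1 ∧ ‖T u‖ < 1 / (n + 1) := by
      intro n
      obtain ⟨x, hx⟩ := hc (1 / (n + 1)) (by positivity)
      have hx0 : x ≠ 0 := by
        rintro rfl
        simp at hx
      refine ⟨‖x‖⁻¹ • x, ?_, ?_⟩
      · rw [norm_smul, norm_inv, norm_norm]
        exact inv_mul_cancel₀ (norm_ne_zero_iff.2 hx0)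
      · rw [map_smul, norm_smul, norm_inv, norm_norm]
        rw [inv_mul_lt_iff₀ (norm_pos_iff.2 hx0)]
        linarith [hx]
    choose u hu1 hu2 using hseq
    -- κ ∘ u lies in a compact closure
    obtain ⟨K, hK, hKsub⟩ :=
      hκ.image_closedBall_subset_compact (𝕜₁ := ℝ) (f := (κ : E →ₗ[ℝ] G)) 1
    have hmem : ∀ n, κ (u n) ∈ K := by
      intro n
      apply hKsub
      exact ⟨u n, by simp [Metric.mem_closedBall, hu1 n], rfl⟩
    obtain ⟨y, _, φ, hφ, hconv⟩ := hK.tendsto_subseq hmem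
    set v : ℕ → E := u ∘ φ with hv
    -- T v → 0
    have hTv : Filter.Tendsto (fun n => T (v n)) Filter.atTop (nhds 0) := by
      rw [tendsto_zero_iff_norm_tendsto_zero]
      have hb : ∀ n : ℕ, ‖T (v n)‖ ≤ 1 / (n + 1) := by
        intro n
        refine le_trans (hu2 (φ n)).le ?_
        apply one_div_le_one_div_of_le (by positivity)
        have : (n : ℝ) ≤ φ n := Nat.cast_le.2 hφ.le_apply
        linarith
      have h0 : Filter.Tendsto (fun n : ℕ => 1 / ((n : ℝ) + 1)) Filter.atTop (nhds 0) :=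
        tendsto_one_div_add_atTop_nhds_zero_nat
      exact squeeze_zero (fun n => norm_nonneg _) hb h0
    -- v is Cauchy
    have hcauchy : CauchySeq v := by
      rw [Metric.cauchySeq_iff]
      intro ε hε
      have hκc : CauchySeq (fun n => κ (v n)) := hconv.cauchySeq
      rw [Metric.cauchySeq_iff] at hκc
      obtain ⟨N₁, hN₁⟩ := hκc (γ * ε / 2) (by positivity)
      have hTc := Metric.tendsto_atTop.1 (tendsto_zero_iff_norm_tendsto_zero.2
        (tendsto_zero_iff_norm_tendsto_zero.1 hTv)) (γ * ε / 4) (by positivity)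
      obtain ⟨N₂, hN₂⟩ := hTc
      refine ⟨max N₁ N₂, fun m hm n hn => ?_⟩
      have h1 := hN₁ m (le_trans (le_max_left _ _) hm) n (le_trans (le_max_left _ _) hn)
      have h2 := hN₂ m (le_trans (le_max_right _ _) hm)
      have h3 := hN₂ n (le_trans (le_max_right _ _) hn)
      rw [dist_zero_right] at h2 h3
      rw [dist_eq_norm] at h1 ⊢
      have key := h (v m - v n)
      rw [map_sub, map_sub] at key
      have hsum : ‖T (v m) - T (v n)‖ ≤ ‖T (v m)‖ + ‖T (v n)‖ := norm_sub_le _ _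
      have : γ * ‖v m - v n‖ < γ * ε := by
        calc γ * ‖v m - v n‖ ≤ ‖T (v m) - T (v n)‖ + ‖κ (v m) - κ (v n)‖ := key
          _ < (γ * ε / 4 + γ * ε / 4) + γ * ε / 2 := by
              apply add_lt_add_of_le_of_lt (le_trans hsum (by linarith [h2, h3])) h1
          _ = γ * ε := by ring
      exact lt_of_mul_lt_mul_left this hγ.le
    obtain ⟨x, hx⟩ := cauchySeq_tendsto_of_complete hcauchy
    -- limit has norm 1 and T x = 0
    have hnx : ‖x‖ = 1 := by
      have : Filter.Tendsto (fun n => ‖v n‖) Filter.atTop (nhds ‖x‖) := hx.norm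
      have h1 : (fun n => ‖v n‖) = fun _ => (1 : ℝ) := funext fun n => hu1 (φ n)
      rw [h1] at this
      exact (tendsto_const_nhds_iff.1 this).symm
    have hTx : T x = 0 := by
      have : Filter.Tendsto (fun n => T (v n)) Filter.atTop (nhds (T x)) :=
        (T.continuous.tendsto x).comp hx
      exact tendsto_nhds_unique this hTv
    have : x = 0 := hinj (by simpa using hTx)
    rw [this] at hnx
    simp at hnx
  refine ⟨main, ?_⟩
  obtain ⟨c, hc, hcle⟩ := main
  have hanti : AntilipschitzWith (⟨c⁻¹, by positivity⟩ : NNReal) T := by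
    apply AddMonoidHomClass.antilipschitz_of_bound
    intro x
    have := hcle x
    show ‖x‖ ≤ c⁻¹ * ‖T x‖
    rw [le_inv_mul_iff₀ hc]
    exact this
  exact hanti.isClosed_range T.uniformContinuous
end

section
/- Let E and F be Banach spaces and T : E → F a compact bounded linear operator. Then the adjoint (dual) operator T' : F' → E', defined by ⟨T'ℓ, x⟩ = ⟨ℓ, Tx⟩, is also compact. -/
/-!
Let `K` be the closure of the image of the unit ball under `T`; it is compact. Restricting the
functionals of the dual unit ball to `K` gives a bounded, equicontinuous (indeed `1`-Lipschitz)
family of continuous functions on `K`, which is relatively compact by Arzelà–Ascoli. Since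
`‖ℓ ∘ T - ℓ' ∘ T‖ ≤ sup_K |ℓ - ℓ'|`, total boundedness passes from these restrictions to the
image of the dual unit ball under `T'`.
-/

open Metric Set BoundedContinuousFunction

theorem TotallyBounded.image_of_dist_le {α β γ : Type*} [PseudoMetricSpace β]
    [PseudoMetricSpace γ] {s : Set α} {f : α → β} {g : α → γ} (hf : TotallyBounded (f '' s))
    (hfg : ∀ x ∈ s, ∀ y ∈ s, dist (g x) (g y) ≤ dist (f x) (f y)) :
    TotallyBounded (g '' s) := by
  refine Metric.totallyBounded_iff.mpr fun ε hε => ?_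
  obtain ⟨t, hts, htfin, hcov⟩ := exists_subset_image_finite_and.mp
    (finite_approx_of_totallyBounded hf ε hε)
  refine ⟨g '' t, htfin.image g, ?_⟩
  rintro _ ⟨x, hx, rfl⟩
  obtain ⟨_, ⟨y, hy, rfl⟩, hxy⟩ := mem_iUnion₂.mp (hcov (mem_image_of_mem f hx))
  exact mem_iUnion₂.mpr ⟨g y, mem_image_of_mem g hy,
    (hfg x hx y (hts hy)).trans_lt (mem_ball.mp hxy)⟩

namespace StrongDual

variable {𝕜 E F : Type*} [RCLike 𝕜] [NormedAddCommGroup E] [NormedSpace 𝕜 E]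
  [NormedAddCommGroup F] [NormedSpace 𝕜 F] (K : Set F) [CompactSpace K]

noncomputable def restrictBCF (ℓ : StrongDual 𝕜 F) : K →ᵇ 𝕜 :=
  mkOfCompact ((ℓ : C(F, 𝕜)).restrict K)

@[simp]
theorem restrictBCF_apply (ℓ : StrongDual 𝕜 F) (x : K) : restrictBCF K ℓ x = ℓ x := rfl

theorem isCompact_closure_restrictBCF_image_closedBall (r : ℝ) :
    IsCompact (closure (restrictBCF K '' closedBall (0 : StrongDual 𝕜 F) r)) := by
  obtain ⟨R, hR⟩ := ((isCompact_iff_compactSpace (s := K)).mpr ‹_›).isBounded.subset_closedBall 0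
  refine arzela_ascoli (closedBall 0 (r * R)) (isCompact_closedBall _ _) _ ?bounded ?equicont
  case bounded =>
    rintro _ x ⟨ℓ, hℓ, rfl⟩
    rw [mem_closedBall_zero_iff] at hℓ ⊢
    have hx : ‖(x : F)‖ ≤ R := mem_closedBall_zero_iff.mp (hR x.2)
    exact (ℓ.le_opNorm x).trans (mul_le_mul hℓ hx (norm_nonneg _) ((norm_nonneg ℓ).trans hℓ))
  case equicont =>
    refine (LipschitzWith.uniformEquicontinuous _ r.toNNReal ?_).equicontinuous
    rintro ⟨_, ℓ, hℓ, rfl⟩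
    rw [mem_closedBall_zero_iff] at hℓ
    exact (ℓ.lipschitz.weaken (NNReal.le_toNNReal_of_coe_le hℓ)).restrict K

theorem dist_comp_le_dist_restrictBCF {T : E →L[𝕜] F} (hT : T '' closedBall 0 1 ⊆ K)
    (ℓ ℓ' : StrongDual 𝕜 F) :
    dist (ℓ.comp T) (ℓ'.comp T) ≤ dist (restrictBCF K ℓ) (restrictBCF K ℓ') := by
  rw [dist_eq_norm, ← ContinuousLinearMap.sub_comp]
  refine ContinuousLinearMap.opNorm_le_of_unit_norm dist_nonneg fun x hx => ?_
  have hTx : T x ∈ K := hT (mem_image_of_mem T (mem_closedBall_zero_iff.mpr hx.le))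
  simpa [dist_eq_norm] using
    dist_coe_le_dist (f := restrictBCF K ℓ) (g := restrictBCF K ℓ') ⟨T x, hTx⟩

end StrongDual

theorem adjoint_compact_of_compact_general
    {E F : Type*} [NormedAddCommGroup E] [NormedSpace ℝ E]
    [NormedAddCommGroup F] [NormedSpace ℝ F]
    (T : E →L[ℝ] F) (hT : IsCompactOperator T) :
    IsCompactOperator (fun ℓ : StrongDual ℝ F => (ℓ.comp T : StrongDual ℝ E)) := by
  set K := closure (T '' closedBall 0 1)
  have : CompactSpace K := isCompact_iff_compactSpace.mp (hT.isCompact_closure_image_closedBall 1)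
  have hTB : TotallyBounded ((fun ℓ : StrongDual ℝ F => ℓ.comp T) '' closedBall 0 1) :=
    ((StrongDual.isCompact_closure_restrictBCF_image_closedBall K 1).totallyBounded.subset
      subset_closure).image_of_dist_le fun ℓ _ ℓ' _ =>
        StrongDual.dist_comp_le_dist_restrictBCF K subset_closure ℓ ℓ'
  exact (isCompactOperator_iff_exists_mem_nhds_isCompact_closure_image _).mpr
    ⟨closedBall 0 1, closedBall_mem_nhds _ one_pos,
      hTB.closure.isCompact_of_isClosed isClosed_closure⟩

/-- Schauder's theorem: the Banach-space adjoint `T' : F' → E'`, `ℓ ↦ ℓ ∘ T`,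
of a compact operator `T : E → F` is compact. -/
theorem adjoint_compact_of_compact
    {E F : Type*} [NormedAddCommGroup E] [NormedSpace ℝ E] [CompleteSpace E]
    [NormedAddCommGroup F] [NormedSpace ℝ F] [CompleteSpace F]
    (T : E →L[ℝ] F) (hT : IsCompactOperator T) :
    IsCompactOperator (fun ℓ : StrongDual ℝ F => (ℓ.comp T : StrongDual ℝ E)) :=
  adjoint_compact_of_compact_general T hT
end

section
/- (Closed range theorem, bounded case) Let E, F be Banach spaces and T : E → F a bounded linear map. Then Im(T) is closed in F if and only if Im(T') is closed in E', and in this case Im(T) = Ker(T')^⊥ and Im(T') = Ker(T)°. -/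
set_option maxHeartbeats 1000000
set_option synthInstance.maxHeartbeats 400000

set_option linter.unusedSectionVars false

open Filter Function Metric Finset Topology





section aux
variable {E Z : Type*} [NormedAddCommGroup E] [NormedSpace ℝ E] [CompleteSpace E]
  [NormedAddCommGroup Z] [NormedSpace ℝ Z]

/-- Iteration step of the open mapping theorem: approximate preimages with controlled
norm give exact preimages. -/
lemma crt_aux_surj (S : E →L[ℝ] Z) (C : ℝ) (C0 : 0 ≤ C)
    (happrox : ∀ y : Z, ∃ x, ‖x‖ ≤ C * ‖y‖ ∧ ‖y - S x‖ ≤ 1 / 2 * ‖y‖) :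
    Function.Surjective S := by
  choose g hg1 hg2 using happrox
  intro y
  let h : Z → Z := fun y => y - S (g y)
  have hle : ∀ y, ‖h y‖ ≤ 1 / 2 * ‖y‖ := hg2
  have hnle : ∀ n : ℕ, ‖h^[n] y‖ ≤ (1 / 2) ^ n * ‖y‖ := by
    intro n
    induction n with
    | zero => simp
    | succ n IH =>
      rw [Function.iterate_succ']
      refine le_trans (hle _) ?_
      rw [pow_succ', mul_assoc]
      gcongr
  let u : ℕ → E := fun n => g (h^[n] y)
  have ule : ∀ n, ‖u n‖ ≤ (1 / 2) ^ n * (C * ‖y‖) := fun n => by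
    refine le_trans (hg1 _) ?_
    calc C * ‖h^[n] y‖ ≤ C * ((1 / 2) ^ n * ‖y‖) := by
          exact mul_le_mul_of_nonneg_left (hnle n) C0
      _ = (1 / 2) ^ n * (C * ‖y‖) := by ring
  have sNu : Summable fun n => ‖u n‖ := by
    refine Summable.of_nonneg_of_le (fun n => norm_nonneg _) ule ?_
    exact Summable.mul_right _ (summable_geometric_of_lt_one (by norm_num) (by norm_num))
  have su : Summable u := sNu.of_norm
  let x := tsum u
  have fsumeq : ∀ n : ℕ, S (∑ i ∈ Finset.range n, u i) = y - h^[n] y := by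
    intro n
    induction n with
    | zero => simp
    | succ n IH =>
      rw [Finset.sum_range_succ, map_add, IH, Function.iterate_succ_apply', sub_add]
  have hx : Tendsto (fun n => ∑ i ∈ Finset.range n, u i) atTop (𝓝 x) :=
    su.hasSum.tendsto_sum_nat
  have L₁ : Tendsto (fun n => S (∑ i ∈ Finset.range n, u i)) atTop (𝓝 (S x)) :=
    (S.continuous.tendsto _).comp hx
  simp only [fsumeq] at L₁
  have L₂ : Tendsto (fun n => y - h^[n] y) atTop (𝓝 (y - 0)) := by
    refine tendsto_const_nhds.sub ?_
    rw [tendsto_iff_norm_sub_tendsto_zero]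
    simp only [sub_zero]
    refine squeeze_zero (fun _ => norm_nonneg _) hnle ?_
    rw [← zero_mul ‖y‖]
    refine (tendsto_pow_atTop_nhds_zero_of_lt_one ?_ ?_).mul tendsto_const_nhds <;> norm_num
  have feq : S x = y - 0 := tendsto_nhds_unique L₁ L₂
  rw [sub_zero] at feq
  exact ⟨x, feq⟩

end aux

open Metric

section aux2
variable {E Z : Type*} [NormedAddCommGroup E] [NormedSpace ℝ E] [CompleteSpace E]
  [NormedAddCommGroup Z] [NormedSpace ℝ Z]

/-- If the adjoint of `S` is bounded below, then every `y` is in the closure of the image of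
a controlled ball. -/
lemma crt_aux_dense (S : E →L[ℝ] Z) (c : ℝ) (hc : 0 < c)
    (hb : ∀ g : Z →L[ℝ] ℝ, ‖g‖ ≤ c * ‖g.comp S‖) (y : Z) :
    y ∈ closure (S '' closedBall 0 (c * ‖y‖)) := by
  by_cases hy0 : y = 0
  · refine subset_closure ⟨0, ?_, by simp [hy0]⟩
    simp [mem_closedBall, hy0]
  have hyn : 0 < ‖y‖ := norm_pos_iff.2 hy0
  by_contra hy
  have hconv : Convex ℝ (closure (S '' closedBall 0 (c * ‖y‖))) :=
    ((convex_closedBall (0 : E) (c * ‖y‖)).linear_image S.toLinearMap).closure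
  obtain ⟨g, u, hgu, huy⟩ := geometric_hahn_banach_closed_point hconv isClosed_closure hy
  have h0mem : (0 : Z) ∈ closure (S '' closedBall 0 (c * ‖y‖)) := by
    refine subset_closure ⟨0, ?_, by simp⟩
    simp only [mem_closedBall, dist_self]
    positivity
  have hu0 : 0 < u := by simpa using hgu 0 h0mem
  -- pointwise bound on g ∘ S
  have hball : ∀ x : E, ‖x‖ ≤ c * ‖y‖ → g (S x) < u := fun x hx =>
    hgu _ (subset_closure ⟨x, by simpa [mem_closedBall] using hx, rfl⟩)
  have hbound : ∀ x : E, ‖g (S x)‖ ≤ u / (c * ‖y‖) * ‖x‖ := by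
    intro x
    rcases eq_or_ne x 0 with rfl | hx0
    · simp
    have hxn : 0 < ‖x‖ := norm_pos_iff.2 hx0
    have hcy : 0 < c * ‖y‖ := by positivity
    set t : ℝ := (c * ‖y‖) / ‖x‖ with ht
    have htpos : 0 < t := by positivity
    have hnorm : ‖t • x‖ = c * ‖y‖ := by
      rw [norm_smul, Real.norm_eq_abs, abs_of_pos htpos, ht]
      field_simp
    have h1 : g (S (t • x)) < u := hball _ (le_of_eq hnorm)
    have h2 : g (S (t • (-x))) < u := hball _ (by simpa using hnorm.le)
    have e1 : g (S (t • x)) = t * g (S x) := by simp [map_smul]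
    have e2 : g (S (t • (-x))) = -(t * g (S x)) := by simp [map_smul]
    rw [e1] at h1; rw [e2] at h2
    have habs : |t * g (S x)| ≤ u := abs_le.2 ⟨by linarith, h1.le⟩
    rw [abs_mul, abs_of_pos htpos] at habs
    have : |g (S x)| ≤ u / t := (le_div_iff₀ htpos).2 (by rw [mul_comm]; exact habs)
    rw [Real.norm_eq_abs]
    calc |g (S x)| ≤ u / t := this
      _ = u / (c * ‖y‖) * ‖x‖ := by rw [ht]; field_simp
  have hgs : ‖g.comp S‖ ≤ u / (c * ‖y‖) := by
    refine ContinuousLinearMap.opNorm_le_bound _ (by positivity) ?_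
    intro x; exact hbound x
  have hgle : ‖g‖ ≤ u / ‖y‖ := by
    calc ‖g‖ ≤ c * ‖g.comp S‖ := hb g
      _ ≤ c * (u / (c * ‖y‖)) := by gcongr
      _ = u / ‖y‖ := by field_simp
  have : g y ≤ u := by
    calc g y ≤ ‖g y‖ := le_abs_self _
      _ ≤ ‖g‖ * ‖y‖ := g.le_opNorm y
      _ ≤ u / ‖y‖ * ‖y‖ := by gcongr
      _ = u := by field_simp
  linarith

lemma crt_aux_surj_of_bddBelow (S : E →L[ℝ] Z) (c : ℝ) (hc : 0 < c)
    (hb : ∀ g : Z →L[ℝ] ℝ, ‖g‖ ≤ c * ‖g.comp S‖) :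
    Function.Surjective S := by
  apply crt_aux_surj S c hc.le
  intro y
  rcases eq_or_ne y 0 with rfl | hy0
  · exact ⟨0, by simp, by simp⟩
  have hyn : 0 < ‖y‖ := norm_pos_iff.2 hy0
  have := crt_aux_dense S c hc hb y
  rcases Metric.mem_closure_iff.1 this (1 / 2 * ‖y‖) (by positivity) with ⟨z, hz, hdz⟩
  rcases hz with ⟨x, hx, rfl⟩
  refine ⟨x, ?_, ?_⟩
  · simpa [mem_closedBall, dist_eq_norm] using hx
  · rw [← dist_eq_norm]; exact hdz.le

end aux2

section aux3
variable {G H : Type*} [NormedAddCommGroup G] [NormedSpace ℝ G] [CompleteSpace G]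
  [NormedAddCommGroup H] [NormedSpace ℝ H] [CompleteSpace H]

/-- An injective continuous linear map with closed range between Banach spaces is
bounded below. -/
lemma crt_aux_bddBelow (f : G →L[ℝ] H) (hinj : Function.Injective f)
    (hclo : IsClosed (Set.range f)) :
    ∃ c : ℝ, 0 < c ∧ ∀ x, ‖x‖ ≤ c * ‖f x‖ := by
  set e : G ≃SL[RingHom.id ℝ] LinearMap.range (f : G →ₗ[ℝ] H) := f.equivRange hinj hclo with hedef
  refine ⟨‖(e.symm : LinearMap.range (f : G →ₗ[ℝ] H) →L[ℝ] G)‖ + 1, by positivity, fun x => ?_⟩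
  have h1 : e.symm (e x) = x := e.symm_apply_apply x
  have h2 : ‖e x‖ = ‖f x‖ := by
    rw [hedef]
    simp only [ContinuousLinearMap.coe_equivRange]
    rfl
  calc ‖x‖ = ‖e.symm (e x)‖ := by rw [h1]
    _ ≤ ‖(e.symm : LinearMap.range (f : G →ₗ[ℝ] H) →L[ℝ] G)‖ * ‖e x‖ :=
        (e.symm : LinearMap.range (f : G →ₗ[ℝ] H) →L[ℝ] G).le_opNorm (e x)
    _ = ‖(e.symm : LinearMap.range (f : G →ₗ[ℝ] H) →L[ℝ] G)‖ * ‖f x‖ := by rw [h2]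
    _ ≤ (‖(e.symm : LinearMap.range (f : G →ₗ[ℝ] H) →L[ℝ] G)‖ + 1) * ‖f x‖ := by
        have := norm_nonneg (f x); nlinarith [norm_nonneg (e.symm : LinearMap.range (f : G →ₗ[ℝ] H) →L[ℝ] G)]

end aux3

section aux4
open Metric ContinuousLinearMap
variable {E F : Type*} [NormedAddCommGroup E] [NormedSpace ℝ E] [CompleteSpace E]
  [NormedAddCommGroup F] [NormedSpace ℝ F] [CompleteSpace F]

/-- Hard direction of the closed range theorem: if the range of the adjoint is closed,
then the range of `T` is closed. -/
lemma crt_hard (T : E →L[ℝ] F)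
    (hA : IsClosed {k : E →L[ℝ] ℝ | ∃ ℓ : F →L[ℝ] ℝ, k = ℓ.comp T}) :
    IsClosed (Set.range T) := by
  set Z : Submodule ℝ F := (LinearMap.range (T : E →ₗ[ℝ] F)).topologicalClosure with hZdef
  have hZclosed : IsClosed (Z : Set F) := Submodule.isClosed_topologicalClosure _
  haveI : CompleteSpace Z := hZclosed.completeSpace_coe
  have hmem : ∀ x, T x ∈ Z := fun x => Submodule.le_topologicalClosure _ ⟨x, rfl⟩
  set S : E →L[ℝ] Z := T.codRestrict Z hmem with hSdef
  have hdense : DenseRange S := by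
    intro z
    rw [Metric.mem_closure_iff]
    intro ε hε
    have hz : (z : F) ∈ closure ((LinearMap.range (T : E →ₗ[ℝ] F) : Submodule ℝ F) : Set F) := by
      rw [← Submodule.topologicalClosure_coe]
      exact z.2
    rcases Metric.mem_closure_iff.1 hz ε hε with ⟨w, hw, hdw⟩
    rcases hw with ⟨x, rfl⟩
    exact ⟨S x, ⟨x, rfl⟩, by rw [Subtype.dist_eq]; exact hdw⟩
  set Φ : (Z →L[ℝ] ℝ) →L[ℝ] (E →L[ℝ] ℝ) :=
    (ContinuousLinearMap.compSL E Z ℝ (RingHom.id ℝ) (RingHom.id ℝ)).flip S with hΦdef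
  have hΦapp : ∀ g : Z →L[ℝ] ℝ, Φ g = g.comp S := fun g => rfl
  have hrange : Set.range Φ = {k : E →L[ℝ] ℝ | ∃ ℓ : F →L[ℝ] ℝ, k = ℓ.comp T} := by
    ext k
    constructor
    · rintro ⟨g, rfl⟩
      obtain ⟨ℓ, hℓ, -⟩ := exists_extension_norm_eq Z g
      refine ⟨ℓ, ?_⟩
      ext x
      have := hℓ (S x)
      exact this.symm
    · rintro ⟨ℓ, rfl⟩
      exact ⟨ℓ.comp Z.subtypeL, by ext x; rfl⟩
  have hΦinj : Function.Injective Φ := by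
    intro g₁ g₂ hgeq
    ext z
    have hzero : ∀ x : E, g₁ (S x) = g₂ (S x) := fun x =>
      congrArg (fun k : E →L[ℝ] ℝ => k x) hgeq
    have hcl : IsClosed {z : Z | g₁ z = g₂ z} := isClosed_eq g₁.continuous g₂.continuous
    have hsub : Set.range S ⊆ {z : Z | g₁ z = g₂ z} := by rintro _ ⟨x, rfl⟩; exact hzero x
    have huniv : (Set.univ : Set Z) ⊆ {z : Z | g₁ z = g₂ z} := by
      rw [← hdense.closure_range]
      exact hcl.closure_subset_iff.2 hsub
    exact huniv (Set.mem_univ z)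
  have hΦclo : IsClosed (Set.range Φ) := hrange ▸ hA
  obtain ⟨c, hcpos, hbb⟩ := crt_aux_bddBelow (G := Z →L[ℝ] ℝ) (H := E →L[ℝ] ℝ) Φ hΦinj (by exact hΦclo)
  have hSsurj : Function.Surjective S :=
    crt_aux_surj_of_bddBelow S c hcpos (fun g => hbb g)
  have hrangeT : Set.range T = (Z : Set F) := by
    apply Set.Subset.antisymm
    · rintro _ ⟨x, rfl⟩; exact hmem x
    · intro z hz
      rcases hSsurj ⟨z, hz⟩ with ⟨x, hx⟩
      exact ⟨x, congrArg Subtype.val hx⟩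
  rw [hrangeT]; exact hZclosed

end aux4


section aux5
variable {E F : Type*} [NormedAddCommGroup E] [NormedSpace ℝ E] [CompleteSpace E]
  [NormedAddCommGroup F] [NormedSpace ℝ F] [CompleteSpace F]

/-- If the range of `T` is closed, any functional vanishing on `ker T` factors through `T`. -/
lemma crt_fact (T : E →L[ℝ] F) (hR : IsClosed (Set.range T)) (k : E →L[ℝ] ℝ)
    (hk : ∀ x : E, T x = 0 → k x = 0) : ∃ ℓ : F →L[ℝ] ℝ, k = ℓ.comp T := by
  have hkey : ∀ x x' : E, T x = T x' → k x = k x' := by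
    intro x x' h
    have h0 : T (x - x') = 0 := by rw [map_sub, h, sub_self]
    have := hk _ h0
    rw [map_sub] at this
    linarith
  set R : Submodule ℝ F := LinearMap.range (T : E →ₗ[ℝ] F) with hRdef
  have hRclosed : IsClosed (R : Set F) := by rwa [hRdef, LinearMap.coe_range]
  haveI : CompleteSpace R := hRclosed.completeSpace_coe
  set Sc : E →L[ℝ] R := T.codRestrict R (fun x => LinearMap.mem_range_self _ x) with hScdef
  have hScT : ∀ x, ((Sc x : R) : F) = T x := fun x => rfl
  have hsurj : Function.Surjective Sc := by
    rintro ⟨z, x, hx⟩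
    exact ⟨x, Subtype.ext hx⟩
  obtain ⟨C, hC, hpre⟩ := ContinuousLinearMap.exists_preimage_norm_le Sc hsurj
  choose pre hpre1 hpre2 using hpre
  have hTpre : ∀ z : R, T (pre z) = (z : F) := fun z => by
    rw [← hScT, hpre1]
  have hkT : ∀ (z : R) (x : E), T x = (z : F) → k (pre z) = k x := fun z x hx =>
    hkey _ _ (by rw [hTpre, hx])
  set g0 : R →ₗ[ℝ] ℝ :=
    { toFun := fun z => k (pre z)
      map_add' := by
        intro z₁ z₂
        have : T (pre (z₁ + z₂)) = T (pre z₁ + pre z₂) := by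
          rw [map_add, hTpre, hTpre, hTpre]; rfl
        rw [hkey _ _ this, map_add]
      map_smul' := by
        intro c z
        have : T (pre (c • z)) = T (c • pre z) := by
          rw [map_smul, hTpre, hTpre]; rfl
        rw [hkey _ _ this, map_smul]
        rfl } with hg0def
  have hg0bound : ∀ z : R, ‖g0 z‖ ≤ ‖k‖ * C * ‖z‖ := by
    intro z
    have h1 : ‖k (pre z)‖ ≤ ‖k‖ * ‖pre z‖ := k.le_opNorm _
    have h2 : ‖pre z‖ ≤ C * ‖z‖ := hpre2 z
    calc ‖g0 z‖ = ‖k (pre z)‖ := rfl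
      _ ≤ ‖k‖ * ‖pre z‖ := h1
      _ ≤ ‖k‖ * (C * ‖z‖) := by gcongr
      _ = ‖k‖ * C * ‖z‖ := by ring
  set g : R →L[ℝ] ℝ := g0.mkContinuous (‖k‖ * C) hg0bound with hgdef
  obtain ⟨ℓ, hℓ, -⟩ := exists_extension_norm_eq R g
  refine ⟨ℓ, ?_⟩
  ext x
  have h1 : ℓ (T x) = g (Sc x) := hℓ (Sc x)
  have h2 : g (Sc x) = k (pre (Sc x)) := rfl
  have h3 : k (pre (Sc x)) = k x := hkT (Sc x) x rfl
  simp only [ContinuousLinearMap.comp_apply]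
  rw [h1, h2, h3]

/-- If the range of `T` is closed, it equals the pre-annihilator of `ker T'`. -/
lemma crt_ann (T : E →L[ℝ] F) (hR : IsClosed (Set.range T)) :
    Set.range T = {y : F | ∀ ℓ : F →L[ℝ] ℝ, ℓ.comp T = 0 → ℓ y = 0} := by
  apply Set.Subset.antisymm
  · rintro _ ⟨x, rfl⟩ ℓ hℓ
    have := congrArg (fun m : E →L[ℝ] ℝ => m x) hℓ
    simpa using this
  · intro y hy
    by_contra hyr
    have hconv : Convex ℝ (Set.range T) := by
      have := (LinearMap.range (T : E →ₗ[ℝ] F)).convex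
      rwa [LinearMap.coe_range] at this
    obtain ⟨g, u, hgu, huy⟩ := geometric_hahn_banach_closed_point hconv hR hyr
    have hu0 : 0 < u := by simpa using hgu 0 ⟨0, map_zero T⟩
    have hg0 : ∀ x : E, g (T x) = 0 := by
      intro x
      by_contra hne
      have h1 : g (T (((u + 1) / g (T x)) • x)) < u := hgu _ ⟨_, rfl⟩
      rw [map_smul, map_smul, smul_eq_mul, div_mul_cancel₀ _ hne] at h1
      linarith
    have hy0 : g y = 0 := hy g (by ext x; exact hg0 x)
    rw [hy0] at huy
    linarith

/-- The annihilator of `ker T` is closed in the dual. -/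
lemma crt_ann_closed (T : E →L[ℝ] F) :
    IsClosed {k : E →L[ℝ] ℝ | ∀ x : E, T x = 0 → k x = 0} := by
  have heq : {k : E →L[ℝ] ℝ | ∀ x : E, T x = 0 → k x = 0} =
      ⋂ x : E, {k : E →L[ℝ] ℝ | T x = 0 → k x = 0} := by
    ext k; simp
  rw [heq]
  refine isClosed_iInter fun x => ?_
  by_cases hx : T x = 0
  · have : {k : E →L[ℝ] ℝ | T x = 0 → k x = 0} =
        (fun k : E →L[ℝ] ℝ => k x) ⁻¹' {0} := by
      ext k; simp [hx]
    rw [this]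
    exact isClosed_singleton.preimage (ContinuousLinearMap.apply ℝ ℝ x).continuous
  · have : {k : E →L[ℝ] ℝ | T x = 0 → k x = 0} = Set.univ := by
      ext k; simp [hx]
    rw [this]
    exact isClosed_univ

end aux5


set_option linter.unusedSectionVars false in
/-- Closed range theorem (bounded case): for `T : E → F` bounded linear between Banach
spaces with adjoint `T' : F' → E'`, `Im T` is closed iff `Im T'` is closed, and in this
case `Im T = (Ker T')^⊥` and `Im T' = (Ker T)°`. -/
theorem closed_range_theorem
    {E F : Type*} [NormedAddCommGroup E] [NormedSpace ℝ E] [CompleteSpace E]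
    [NormedAddCommGroup F] [NormedSpace ℝ F] [CompleteSpace F]
    (T : E →L[ℝ] F) :
    (IsClosed (Set.range T) ↔
      IsClosed {k : E →L[ℝ] ℝ | ∃ ℓ : F →L[ℝ] ℝ, k = ℓ.comp T}) ∧
    (IsClosed (Set.range T) →
      (Set.range T = {y : F | ∀ ℓ : F →L[ℝ] ℝ, ℓ.comp T = 0 → ℓ y = 0}) ∧
      ({k : E →L[ℝ] ℝ | ∃ ℓ : F →L[ℝ] ℝ, k = ℓ.comp T} =
        {k : E →L[ℝ] ℝ | ∀ x : E, T x = 0 → k x = 0})) := by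
  have hB : IsClosed (Set.range T) →
      ({k : E →L[ℝ] ℝ | ∃ ℓ : F →L[ℝ] ℝ, k = ℓ.comp T} =
        {k : E →L[ℝ] ℝ | ∀ x : E, T x = 0 → k x = 0}) := by
    intro hT
    ext k
    constructor
    · rintro ⟨ℓ, rfl⟩ x hx
      simp [hx]
    · intro h
      exact crt_fact T hT k h
  refine ⟨⟨fun hT => ?_, crt_hard T⟩, fun hT => ⟨crt_ann T hT, hB hT⟩⟩
  rw [hB hT]
  exact crt_ann_closed T
end

section
/- (Eckart–Young) Let B = Σ_{i=1}^r σᵢ uᵢ vᵢᵀ be the singular value decomposition of a real m×n matrix B of rank r with σ₁ ≥ ... ≥ σ_r > 0, and for k ≤ r−1 let B_k = Σ_{i=1}^k σᵢ uᵢ vᵢᵀ. Then min over all m×n matrices Z of rank k of ‖B − Z‖ equals σ_{k+1}, and the minimum is attained at Z = B_k, where ‖·‖ is the operator norm induced by the Euclidean norms. -/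
open Matrix

/-- The operator (spectral) norm of a rectangular real matrix, induced by the
Euclidean norms on `ℝⁿ` and `ℝᵐ`. -/
noncomputable def specNorm {m n : ℕ} (A : Matrix (Fin m) (Fin n) ℝ) : ℝ :=
  sSup {r : ℝ | ∃ x : Fin n → ℝ,
    Real.sqrt (∑ i, x i ^ 2) = 1 ∧ r = Real.sqrt (∑ i, (A.mulVec x) i ^ 2)}

namespace EckartYoungAux

/-- sum of squares as a dot product -/
lemma sum_sq_eq_dot {p : ℕ} (y : Fin p → ℝ) : ∑ i, y i ^ 2 = y ⬝ᵥ y := by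
  simp [dotProduct, sq]

lemma sum_mulVec {p q N : ℕ} (s : Finset (Fin N)) (M : Fin N → Matrix (Fin p) (Fin q) ℝ)
    (x : Fin q → ℝ) : (∑ i ∈ s, M i) *ᵥ x = ∑ i ∈ s, (M i) *ᵥ x := by
  ext j
  simp only [mulVec, dotProduct, Finset.sum_apply, Matrix.sum_apply, Finset.sum_mul]
  exact Finset.sum_comm

lemma dotProduct_fsum {q N : ℕ} (s : Finset (Fin N)) (x : Fin q → ℝ) (w : Fin N → Fin q → ℝ) :
    x ⬝ᵥ (∑ i ∈ s, w i) = ∑ i ∈ s, x ⬝ᵥ w i := by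
  simp only [dotProduct, Finset.sum_apply, Finset.mul_sum]
  exact Finset.sum_comm

lemma fsum_dotProduct {q N : ℕ} (s : Finset (Fin N)) (x : Fin q → ℝ) (w : Fin N → Fin q → ℝ) :
    (∑ i ∈ s, w i) ⬝ᵥ x = ∑ i ∈ s, w i ⬝ᵥ x := by
  rw [dotProduct_comm, dotProduct_fsum]
  exact Finset.sum_congr rfl fun i _ => dotProduct_comm _ _

/-- dot of one orthonormal vector with a combination -/
lemma on_dot_comb {p N : ℕ} {u : Fin N → Fin p → ℝ}
    (hu : ∀ i j, u i ⬝ᵥ u j = if i = j then (1 : ℝ) else 0)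
    (s : Finset (Fin N)) (a : Fin N → ℝ) {i : Fin N} (hi : i ∈ s) :
    u i ⬝ᵥ (∑ j ∈ s, a j • u j) = a i := by
  rw [dotProduct_fsum]
  have : ∀ j ∈ s, u i ⬝ᵥ a j • u j = if i = j then a j else 0 := by
    intro j _
    rw [dotProduct_smul, hu i j]
    by_cases h : i = j <;> simp [h]
  rw [Finset.sum_congr rfl this, Finset.sum_ite_eq s i a, if_pos hi]

/-- squared norm of an orthonormal combination -/
lemma on_sum_sq {p N : ℕ} {u : Fin N → Fin p → ℝ}
    (hu : ∀ i j, u i ⬝ᵥ u j = if i = j then (1 : ℝ) else 0)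
    (s : Finset (Fin N)) (a : Fin N → ℝ) :
    (∑ i ∈ s, a i • u i) ⬝ᵥ (∑ j ∈ s, a j • u j) = ∑ i ∈ s, a i ^ 2 := by
  rw [fsum_dotProduct]
  refine Finset.sum_congr rfl fun i hi => ?_
  rw [smul_dotProduct, on_dot_comb hu s a hi]
  simp [sq]

/-- Bessel's inequality for dot products -/
lemma bessel {q N : ℕ} {v : Fin N → Fin q → ℝ}
    (hv : ∀ i j, v i ⬝ᵥ v j = if i = j then (1 : ℝ) else 0) (x : Fin q → ℝ) :
    ∑ i, (v i ⬝ᵥ x) ^ 2 ≤ x ⬝ᵥ x := by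
  set c : Fin N → ℝ := fun i => v i ⬝ᵥ x with hc
  set S : Fin q → ℝ := ∑ i, c i • v i with hS
  have h0 : (0 : ℝ) ≤ (x - S) ⬝ᵥ (x - S) := by
    rw [show (x - S) ⬝ᵥ (x - S) = ∑ j, (x - S) j * (x - S) j from rfl]
    exact Finset.sum_nonneg fun j _ => mul_self_nonneg _
  have hSS : S ⬝ᵥ S = ∑ i, c i ^ 2 := on_sum_sq hv Finset.univ c
  have hSx : S ⬝ᵥ x = ∑ i, c i ^ 2 := by
    rw [hS, fsum_dotProduct]
    refine Finset.sum_congr rfl fun i _ => ?_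
    rw [smul_dotProduct, smul_eq_mul, hc]
    simp [sq]
  have hxS : x ⬝ᵥ S = ∑ i, c i ^ 2 := by rw [dotProduct_comm, hSx]
  have hexp : (x - S) ⬝ᵥ (x - S) = x ⬝ᵥ x - ∑ i, c i ^ 2 := by
    rw [sub_dotProduct, dotProduct_sub, dotProduct_sub, hSS, hSx, hxS]
    ring
  rw [hexp] at h0
  linarith

/-- the set appearing in `specNorm` is bounded above by the Frobenius norm -/
lemma spec_bdd {p q : ℕ} (A : Matrix (Fin p) (Fin q) ℝ) :
    BddAbove {r : ℝ | ∃ x : Fin q → ℝ,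
      Real.sqrt (∑ i, x i ^ 2) = 1 ∧ r = Real.sqrt (∑ i, (A.mulVec x) i ^ 2)} := by
  refine ⟨Real.sqrt (∑ i, ∑ j, A i j ^ 2), ?_⟩
  rintro t ⟨x, hx, rfl⟩
  have hx2 : ∑ i, x i ^ 2 = 1 := Real.sqrt_eq_one.mp hx
  apply Real.sqrt_le_sqrt
  have hterm : ∀ i : Fin p, (A.mulVec x) i ^ 2 ≤ (∑ j, A i j ^ 2) := by
    intro i
    have := Finset.sum_mul_sq_le_sq_mul_sq Finset.univ (fun j => A i j) x
    rw [hx2, mul_one] at this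
    simpa [Matrix.mulVec, dotProduct] using this
  exact Finset.sum_le_sum fun i _ => hterm i

/-- mulVec of a rank-one block -/
lemma rank1_mulVec {p q : ℕ} (σ : ℝ) (u : Fin p → ℝ) (v : Fin q → ℝ) (x : Fin q → ℝ) :
    (Matrix.of fun a b => σ * u a * v b) *ᵥ x = (σ * (v ⬝ᵥ x)) • u := by
  ext a
  simp only [mulVec, dotProduct, of_apply, Pi.smul_apply, smul_eq_mul, Finset.mul_sum]
  rw [Finset.sum_congr rfl (fun b _ => by ring :
    ∀ b ∈ Finset.univ, σ * u a * v b * x b = σ * (v b * x b) * u a)]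
  rw [← Finset.sum_mul, ← Finset.mul_sum]

end EckartYoungAux

open EckartYoungAux

/-- Eckart–Young theorem: if `B = ∑ᵢ σᵢ uᵢ vᵢᵀ` is the SVD of a rank `r` matrix `B`
with `σ₁ ≥ ... ≥ σ_r > 0`, and `B_k = ∑_{i<k} σᵢ uᵢ vᵢᵀ` for `k ≤ r - 1`, then
`‖B - B_k‖ = σ_{k+1}` and `σ_{k+1} ≤ ‖B - Z‖` for every rank-`k` matrix `Z`
(so the minimum of `‖B - Z‖` over rank-`k` matrices is `σ_{k+1}`, attained at `B_k`). -/
theorem eckart_young (m n r : ℕ) (hr : 0 < r)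
    (B : Matrix (Fin m) (Fin n) ℝ)
    (σ : Fin r → ℝ) (u : Fin r → Fin m → ℝ) (v : Fin r → Fin n → ℝ)
    (hσpos : ∀ i, 0 < σ i)
    (hσmono : ∀ i j : Fin r, i ≤ j → σ j ≤ σ i)
    (hu : ∀ i j : Fin r, u i ⬝ᵥ u j = if i = j then (1 : ℝ) else 0)
    (hv : ∀ i j : Fin r, v i ⬝ᵥ v j = if i = j then (1 : ℝ) else 0)
    (hB : B = ∑ i : Fin r, Matrix.of fun a b => σ i * u i a * v i b)
    (hrank : B.rank = r)
    (k : ℕ) (hk : k ≤ r - 1) :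
    specNorm (B - ∑ i ∈ Finset.univ.filter (fun i : Fin r => (i : ℕ) < k),
        Matrix.of fun a b => σ i * u i a * v i b) = σ ⟨k, by omega⟩ ∧
    ∀ Z : Matrix (Fin m) (Fin n) ℝ, Z.rank = k →
      σ ⟨k, by omega⟩ ≤ specNorm (B - Z) := by
  have hkr : k < r := by omega
  set K : Fin r := ⟨k, hkr⟩ with hK
  constructor
  · -- Part 1: specNorm (B - B_k) = σ K
    set s₂ : Finset (Fin r) := Finset.univ.filter (fun i : Fin r => ¬ (i : ℕ) < k) with hs₂
    have hE : B - (∑ i ∈ Finset.univ.filter (fun i : Fin r => (i : ℕ) < k),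
        Matrix.of fun a b => σ i * u i a * v i b) = ∑ i ∈ s₂,
        Matrix.of fun a b => σ i * u i a * v i b := by
      rw [hB, ← Finset.sum_filter_add_sum_filter_not Finset.univ
        (fun i : Fin r => (i : ℕ) < k) (fun i => Matrix.of fun a b => σ i * u i a * v i b)]
      rw [add_sub_cancel_left]
    rw [hE]
    set E := ∑ i ∈ s₂, (Matrix.of fun a b => σ i * u i a * v i b :
      Matrix (Fin m) (Fin n) ℝ) with hEdef
    have hEx : ∀ x : Fin n → ℝ, E *ᵥ x = ∑ i ∈ s₂, (σ i * (v i ⬝ᵥ x)) • u i := by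
      intro x
      rw [hEdef, sum_mulVec]
      exact Finset.sum_congr rfl fun i _ => rank1_mulVec _ _ _ _
    apply IsGreatest.csSup_eq
    constructor
    · -- σ K is attained at x = v K
      refine ⟨v K, ?_, ?_⟩
      · rw [sum_sq_eq_dot, hv K K, if_pos rfl, Real.sqrt_one]
      · have hKs : K ∈ s₂ := by simp [hs₂, hK]
        have : E *ᵥ (v K) = (σ K) • u K := by
          rw [hEx]
          rw [Finset.sum_eq_single K]
          · rw [hv K K, if_pos rfl, mul_one]
          · intro i _ hne
            rw [hv i K, if_neg hne, mul_zero, zero_smul]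
          · intro h; exact absurd hKs h
        rw [this, sum_sq_eq_dot]
        have : (σ K • u K) ⬝ᵥ (σ K • u K) = σ K ^ 2 := by
          rw [smul_dotProduct, dotProduct_smul, hu K K, if_pos rfl]
          simp [sq]
        rw [this, Real.sqrt_sq (le_of_lt (hσpos K))]
    · -- σ K is an upper bound
      rintro t ⟨x, hx, rfl⟩
      have hx2 : ∑ i, x i ^ 2 = 1 := Real.sqrt_eq_one.mp hx
      rw [hEx, sum_sq_eq_dot, on_sum_sq hu s₂ (fun i => σ i * (v i ⬝ᵥ x))]
      have hbound : ∑ i ∈ s₂, (σ i * (v i ⬝ᵥ x)) ^ 2 ≤ σ K ^ 2 := by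
        have h1 : ∀ i ∈ s₂, (σ i * (v i ⬝ᵥ x)) ^ 2 ≤ σ K ^ 2 * (v i ⬝ᵥ x) ^ 2 := by
          intro i hi
          have hKi : K ≤ i := by
            simp only [hs₂, Finset.mem_filter] at hi
            exact Fin.mk_le_of_le_val (by omega)
          have hσi : σ i ≤ σ K := hσmono K i hKi
          have : σ i ^ 2 ≤ σ K ^ 2 := by nlinarith [hσpos i]
          rw [mul_pow]
          exact mul_le_mul_of_nonneg_right this (sq_nonneg _)
        calc ∑ i ∈ s₂, (σ i * (v i ⬝ᵥ x)) ^ 2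
            ≤ ∑ i ∈ s₂, σ K ^ 2 * (v i ⬝ᵥ x) ^ 2 := Finset.sum_le_sum h1
          _ = σ K ^ 2 * ∑ i ∈ s₂, (v i ⬝ᵥ x) ^ 2 := by rw [Finset.mul_sum]
          _ ≤ σ K ^ 2 * ∑ i : Fin r, (v i ⬝ᵥ x) ^ 2 := by
              apply mul_le_mul_of_nonneg_left _ (sq_nonneg _)
              exact Finset.sum_le_sum_of_subset_of_nonneg (Finset.filter_subset _ _)
                (fun i _ _ => sq_nonneg _)
          _ ≤ σ K ^ 2 * (x ⬝ᵥ x) := mul_le_mul_of_nonneg_left (bessel hv x) (sq_nonneg _)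
          _ = σ K ^ 2 := by rw [← sum_sq_eq_dot, hx2, mul_one]
      calc Real.sqrt (∑ i ∈ s₂, (σ i * (v i ⬝ᵥ x)) ^ 2)
          ≤ Real.sqrt (σ K ^ 2) := Real.sqrt_le_sqrt hbound
        _ = σ K := Real.sqrt_sq (le_of_lt (hσpos K))
  · -- Part 2: lower bound for all rank-k matrices
    intro Z hZ
    have hkn : k ≤ n := by
      have := Matrix.rank_le_card_width Z
      rw [hZ, Fintype.card_fin] at this
      exact this
    -- kernel of Z has dimension n - k
    set W : Submodule ℝ (Fin n → ℝ) := LinearMap.ker Z.mulVecLin with hWdef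
    have hrange : Module.finrank ℝ (LinearMap.range Z.mulVecLin) = k := hZ
    have hkerW : Module.finrank ℝ W = n - k := by
      have h := LinearMap.finrank_range_add_finrank_ker Z.mulVecLin
      rw [hrange, Module.finrank_fin_fun, ← hWdef] at h
      omega
    -- span of v_0, ..., v_k has dimension k + 1
    have hk1r : k + 1 ≤ r := hkr
    set w : Fin (k + 1) → (Fin n → ℝ) := fun i => v (Fin.castLE hk1r i) with hwdef
    have hw : ∀ i j : Fin (k + 1), w i ⬝ᵥ w j = if i = j then (1 : ℝ) else 0 := by
      intro i j
      rw [hwdef]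
      simp only [hv]
      by_cases h : i = j
      · simp [h]
      · rw [if_neg h, if_neg fun hc => h (Fin.castLE_injective hk1r hc)]
    have hlin : LinearIndependent ℝ w := by
      rw [Fintype.linearIndependent_iff]
      intro g hg i
      have := on_dot_comb hw Finset.univ g (Finset.mem_univ i)
      rw [hg] at this
      rw [← this]
      simp [dotProduct]
    set V : Submodule ℝ (Fin n → ℝ) := Submodule.span ℝ (Set.range w) with hVdef
    have hVrank : Module.finrank ℝ V = k + 1 := by
      rw [hVdef, finrank_span_eq_card hlin, Fintype.card_fin]
    -- the intersection V ⊓ W is nontrivial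
    have hinf : 0 < Module.finrank ℝ ↥(V ⊓ W) := by
      have h1 := Submodule.finrank_sup_add_finrank_inf_eq V W
      have h2 : Module.finrank ℝ ↥(V ⊔ W) ≤ n := by
        have := Submodule.finrank_le (V ⊔ W)
        rwa [Module.finrank_fin_fun] at this
      rw [hVrank, hkerW] at h1
      omega
    obtain ⟨y, hy0⟩ := Module.finrank_pos_iff_exists_ne_zero.mp hinf
    obtain ⟨hyV, hyW⟩ := y.2
    set x : Fin n → ℝ := (y : Fin n → ℝ) with hxdef
    have hxne : x ≠ 0 := fun h => hy0 (Subtype.ext h)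
    have hxx : 0 < x ⬝ᵥ x := by
      obtain ⟨i, hi⟩ := Function.ne_iff.mp hxne
      refine Finset.sum_pos' (fun j _ => mul_self_nonneg _) ⟨i, Finset.mem_univ i, ?_⟩
      exact mul_self_pos.mpr hi
    set t : ℝ := Real.sqrt (x ⬝ᵥ x) with htdef
    have ht0 : 0 < t := Real.sqrt_pos.mpr hxx
    set x' : Fin n → ℝ := t⁻¹ • x with hx'def
    have hx'V : x' ∈ V := Submodule.smul_mem V t⁻¹ hyV
    have hx'W : x' ∈ W := Submodule.smul_mem W t⁻¹ hyW
    have hx'norm : x' ⬝ᵥ x' = 1 := by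
      have ht2 : t * t = x ⬝ᵥ x := Real.mul_self_sqrt (le_of_lt hxx)
      rw [hx'def, smul_dotProduct, dotProduct_smul, smul_eq_mul, smul_eq_mul, ← ht2]
      field_simp
    -- expand x' in the basis w
    obtain ⟨a, ha⟩ := Submodule.mem_span_range_iff_exists_fun ℝ |>.mp hx'V
    have hasum : ∑ i, a i ^ 2 = 1 := by
      rw [← on_sum_sq hw Finset.univ a, ha, hx'norm]
    -- Z x' = 0
    have hZx' : Z *ᵥ x' = 0 := by
      have := hx'W
      rw [hWdef, LinearMap.mem_ker, Matrix.mulVecLin_apply] at this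
      exact this
    -- compute (B - Z) x'
    have hBZx' : (B - Z) *ᵥ x' = ∑ i : Fin r, (σ i * (v i ⬝ᵥ x')) • u i := by
      rw [Matrix.sub_mulVec, hZx', sub_zero, hB, sum_mulVec]
      exact Finset.sum_congr rfl fun i _ => rank1_mulVec _ _ _ _
    -- c at castLE points equals a
    have hcast : ∀ i : Fin (k + 1), v (Fin.castLE hk1r i) ⬝ᵥ x' = a i := by
      intro i
      rw [← ha]
      exact on_dot_comb hw Finset.univ a (Finset.mem_univ i)
    -- lower bound on the squared norm
    have hlow : σ K ^ 2 ≤ ∑ i : Fin r, (σ i * (v i ⬝ᵥ x')) ^ 2 := by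
      have himg : ∑ i ∈ Finset.univ.image (Fin.castLE hk1r),
          (σ i * (v i ⬝ᵥ x')) ^ 2 ≤ ∑ i : Fin r, (σ i * (v i ⬝ᵥ x')) ^ 2 :=
        Finset.sum_le_sum_of_subset_of_nonneg (Finset.subset_univ _)
          (fun i _ _ => sq_nonneg _)
      have heq : ∑ i ∈ Finset.univ.image (Fin.castLE hk1r),
          (σ i * (v i ⬝ᵥ x')) ^ 2 = ∑ i : Fin (k + 1),
          (σ (Fin.castLE hk1r i) * a i) ^ 2 := by
        rw [Finset.sum_image (fun i _ j _ h => Fin.castLE_injective hk1r h)]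
        exact Finset.sum_congr rfl fun i _ => by rw [hcast i]
      have hterm : ∀ i : Fin (k + 1), σ K ^ 2 * a i ^ 2 ≤
          (σ (Fin.castLE hk1r i) * a i) ^ 2 := by
        intro i
        have hle : Fin.castLE hk1r i ≤ K := by
          rw [hK, Fin.le_def]
          simp only [Fin.coe_castLE]
          omega
        have hσi : σ K ≤ σ (Fin.castLE hk1r i) := hσmono _ _ hle
        have : σ K ^ 2 ≤ σ (Fin.castLE hk1r i) ^ 2 := by nlinarith [hσpos K]
        rw [mul_pow]
        exact mul_le_mul_of_nonneg_right this (sq_nonneg _)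
      calc σ K ^ 2 = σ K ^ 2 * ∑ i, a i ^ 2 := by rw [hasum, mul_one]
        _ = ∑ i : Fin (k + 1), σ K ^ 2 * a i ^ 2 := Finset.mul_sum _ _ _
        _ ≤ ∑ i : Fin (k + 1), (σ (Fin.castLE hk1r i) * a i) ^ 2 :=
            Finset.sum_le_sum fun i _ => hterm i
        _ = ∑ i ∈ Finset.univ.image (Fin.castLE hk1r), (σ i * (v i ⬝ᵥ x')) ^ 2 := heq.symm
        _ ≤ ∑ i : Fin r, (σ i * (v i ⬝ᵥ x')) ^ 2 := himg
    -- conclude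
    have hmem : Real.sqrt (∑ i, ((B - Z) *ᵥ x') i ^ 2) ∈ {s : ℝ | ∃ x : Fin n → ℝ,
        Real.sqrt (∑ i, x i ^ 2) = 1 ∧ s = Real.sqrt (∑ i, ((B - Z).mulVec x) i ^ 2)} := by
      refine ⟨x', ?_, rfl⟩
      rw [sum_sq_eq_dot, hx'norm, Real.sqrt_one]
    have hval : σ K ≤ Real.sqrt (∑ i, ((B - Z) *ᵥ x') i ^ 2) := by
      rw [sum_sq_eq_dot, hBZx', on_sum_sq hu Finset.univ (fun i => σ i * (v i ⬝ᵥ x'))]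
      calc σ K = Real.sqrt (σ K ^ 2) := (Real.sqrt_sq (le_of_lt (hσpos K))).symm
        _ ≤ Real.sqrt (∑ i : Fin r, (σ i * (v i ⬝ᵥ x')) ^ 2) := Real.sqrt_le_sqrt hlow
    exact le_trans hval (le_csSup (spec_bdd (B - Z)) hmem)
end
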